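/- arXiv:0808.3737 — 3 statements merged into one kernel-verified Lean document; each statement's English description precedes it below -/
import Mathlib

section
/- For 1 < r < ∞ and τ > 0, there is a constant C (depending on r and τ) such that |2∫₀^τ (t^r + e)^{-1} dt − (2π)/(r sin(π/r)) e^{-(r-1)/r}| ≤ C·g(e) for all e ∈ (0,1], where g(e) = 1 if r < 2, g(e) = 1 + log(1 + 1/e) if r = 2, and g(e) = 1 + e^{2−r} if r > 2. -/
open Real MeasureTheory Set


theorem beta_Ioo (a : ℝ) (h0 : 0 < a) (h1 : a < 1) :
    ∫ x in Ioo (0:ℝ) 1, x ^ (a-1) * (1-x) ^ (-a) = π / Real.sin (π * a) := by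
  have hB : Complex.betaIntegral (a:ℂ) ((1-a : ℝ):ℂ) =
      ((∫ x in Ioo (0:ℝ) 1, x ^ (a-1) * (1-x) ^ (-a) : ℝ) : ℂ) := by
    rw [Complex.betaIntegral, intervalIntegral.integral_of_le zero_le_one,
      ← MeasureTheory.integral_Ioc_eq_integral_Ioo,
      show ((∫ t in Ioc (0:ℝ) 1, t ^ (a-1) * (1-t) ^ (-a) : ℝ) : ℂ)
        = ∫ t in Ioc (0:ℝ) 1, ((t ^ (a-1) * (1-t) ^ (-a) : ℝ) : ℂ) from integral_ofReal.symm]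
    refine setIntegral_congr_fun measurableSet_Ioc fun x hx => ?_
    have hx0 : (0:ℝ) ≤ x := hx.1.le
    have hx1 : (0:ℝ) ≤ 1 - x := by linarith [hx.2]
    have e1 : ((a:ℂ) - 1) = ((a - 1 : ℝ) : ℂ) := by push_cast; ring
    have e2 : (((1-a:ℝ):ℂ) - 1) = ((-a : ℝ) : ℂ) := by push_cast; ring
    have e3 : ((1:ℂ) - x) = ((1 - x : ℝ) : ℂ) := by push_cast; ring
    rw [e1, e2, e3, ← Complex.ofReal_cpow hx0, ← Complex.ofReal_cpow hx1,
      ← Complex.ofReal_mul]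
  have hG := Complex.Gamma_mul_Gamma_eq_betaIntegral
    (s := (a:ℂ)) (t := ((1-a : ℝ) :ℂ)) (by simpa using h0) (by simp [h1])
  rw [hB] at hG
  have : ((a:ℂ)) + ((1-a:ℝ):ℂ) = 1 := by push_cast; ring
  rw [this, Complex.Gamma_one, one_mul, Complex.Gamma_ofReal, Complex.Gamma_ofReal,
    ← Complex.ofReal_mul, Real.Gamma_mul_Gamma_one_sub] at hG
  exact_mod_cast hG.symm



theorem beta_Ioi (a : ℝ) (h0 : 0 < a) (h1 : a < 1) :
    ∫ y in Ioi (0:ℝ), y ^ (a-1) * (1+y)⁻¹ = π / Real.sin (π * a) := by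
  have himg : (fun x : ℝ => x / (1-x)) '' Ioo 0 1 = Ioi 0 := by
    ext u
    constructor
    · rintro ⟨x, hx, rfl⟩
      exact div_pos hx.1 (by linarith [hx.2])
    · intro hu
      have hu' : (0:ℝ) < 1 + u := by linarith [mem_Ioi.1 hu]
      refine ⟨u / (1+u), ⟨div_pos (mem_Ioi.1 hu) hu', (div_lt_one hu').2 (by linarith)⟩, ?_⟩
      show (u / (1+u)) / (1 - u / (1+u)) = u
      have h1u : 1 - u / (1+u) = 1 / (1+u) := by field_simp; ring
      rw [h1u]
      field_simp
  have hder : ∀ x ∈ Ioo (0:ℝ) 1, HasDerivWithinAt (fun x : ℝ => x / (1-x))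
      (((1-x)^2)⁻¹) (Ioo (0:ℝ) 1) x := by
    intro x hx
    have hx1 : (1:ℝ) - x ≠ 0 := sub_ne_zero.mpr (ne_of_gt hx.2)
    have := (hasDerivAt_id x).div ((hasDerivAt_const x (1:ℝ)).sub (hasDerivAt_id x)) hx1
    exact this.hasDerivWithinAt.congr_deriv (by simp only [Pi.sub_apply, id_eq]; ring)
  have hinj : InjOn (fun x : ℝ => x / (1-x)) (Ioo 0 1) := by
    intro x hx y hy h
    simp only at h
    have hx1 : (1:ℝ) - x ≠ 0 := sub_ne_zero.mpr (ne_of_gt hx.2)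
    have hy1 : (1:ℝ) - y ≠ 0 := sub_ne_zero.mpr (ne_of_gt hy.2)
    field_simp at h
    linarith
  rw [← himg, integral_image_eq_integral_abs_deriv_smul measurableSet_Ioo hder hinj]
  rw [← beta_Ioo a h0 h1]
  refine setIntegral_congr_fun measurableSet_Ioo fun x hx => ?_
  have hx0 : (0:ℝ) < x := hx.1
  have hu : (0:ℝ) < 1 - x := by linarith [hx.2]
  have h1u : 1 + x / (1-x) = (1-x)⁻¹ := by field_simp; ring
  rw [smul_eq_mul, h1u, inv_inv, Real.div_rpow hx0.le hu.le, abs_of_pos (by positivity)]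
  rw [div_eq_mul_inv (x ^ (a-1)), ← Real.rpow_natCast (1-x) 2, ← Real.rpow_neg hu.le,
    ← Real.rpow_neg hu.le]
  have hone : (1 - x) = (1-x) ^ (1:ℝ) := (Real.rpow_one _).symm
  nth_rewrite 3 [hone]
  have hc : (1-x) ^ (-((2:ℕ):ℝ)) * ((1-x) ^ (-(a-1)) * (1-x) ^ (1:ℝ)) = (1-x) ^ (-a) := by
    rw [← Real.rpow_add hu, ← Real.rpow_add hu]
    congr 1
    push_cast
    ring
  linear_combination x ^ (a-1) * hc



theorem K_eq (r : ℝ) (hr : 1 < r) :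
    ∫ t in Ioi (0:ℝ), (t ^ r + 1)⁻¹ = π / (r * Real.sin (π / r)) := by
  have hr0 : (0:ℝ) < r := by linarith
  set g : ℝ → ℝ := fun y => (1/r) * (y ^ (1/r - 1) * (1+y)⁻¹) with hg
  have key := MeasureTheory.integral_comp_rpow_Ioi_of_pos (g := g) hr0
  have hL : (∫ x in Ioi (0:ℝ), (r * x ^ (r - 1)) • g (x ^ r))
      = ∫ t in Ioi (0:ℝ), (t ^ r + 1)⁻¹ := by
    refine setIntegral_congr_fun measurableSet_Ioi fun x hx => ?_
    have hx0 : (0:ℝ) < x := hx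
    have h1 : (x ^ r) ^ (1/r - 1) = x ^ (1 - r) := by
      rw [← Real.rpow_mul hx0.le]
      congr 1
      field_simp
    simp only [hg, smul_eq_mul]
    rw [h1, add_comm (1:ℝ) (x ^ r)]
    have h2 : x ^ (r-1) * x ^ (1-r) = 1 := by
      rw [← Real.rpow_add hx0]
      norm_num
    calc r * x ^ (r-1) * (1/r * (x ^ (1-r) * (x ^ r + 1)⁻¹))
        = (x ^ (r-1) * x ^ (1-r)) * (r * (1/r)) * (x ^ r + 1)⁻¹ := by ring
      _ = (x ^ r + 1)⁻¹ := by rw [h2, mul_one_div_cancel hr0.ne', one_mul, one_mul]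
  have hR : (∫ y in Ioi (0:ℝ), g y) = π / (r * Real.sin (π / r)) := by
    rw [hg]
    rw [MeasureTheory.integral_const_mul]
    have : ∫ y in Ioi (0:ℝ), y ^ (1/r - 1) * (1+y)⁻¹ = π / Real.sin (π * (1/r)) :=
      beta_Ioi (1/r) (by positivity) (by rw [div_lt_one hr0]; linarith)
    rw [this, mul_one_div, div_mul_div_comm, one_mul]
  rw [← hL, key, hR]

theorem int_Ioi_eq (r e : ℝ) (hr : 1 < r) (he : 0 < e) :
    ∫ t in Ioi (0:ℝ), (t ^ r + e)⁻¹
      = e ^ (-(r-1)/r) * (π / (r * Real.sin (π / r))) := by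
  have hr0 : (0:ℝ) < r := by linarith
  have hc : (0:ℝ) < e ^ r⁻¹ := Real.rpow_pos_of_pos he _
  have key := MeasureTheory.integral_comp_mul_left_Ioi
    (fun t : ℝ => (t ^ r + e)⁻¹) 0 hc
  rw [mul_zero] at key
  have hL : (∫ x in Ioi (0:ℝ), ((e ^ r⁻¹ * x) ^ r + e)⁻¹)
      = e⁻¹ * ∫ t in Ioi (0:ℝ), (t ^ r + 1)⁻¹ := by
    rw [← MeasureTheory.integral_const_mul]
    refine setIntegral_congr_fun measurableSet_Ioi fun x hx => ?_
    have hx0 : (0:ℝ) < x := hx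
    have h1 : (e ^ r⁻¹ * x) ^ r = e * x ^ r := by
      rw [Real.mul_rpow hc.le hx0.le, ← Real.rpow_mul he.le,
        inv_mul_cancel₀ hr0.ne', Real.rpow_one]
    rw [h1]
    rw [show e * x ^ r + e = e * (x ^ r + 1) by ring, mul_inv]
  rw [hL, K_eq r hr] at key
  have hsm : (e ^ r⁻¹ : ℝ)⁻¹ • (∫ t in Ioi (0:ℝ), (t ^ r + e)⁻¹)
      = (e ^ r⁻¹ : ℝ)⁻¹ * (∫ t in Ioi (0:ℝ), (t ^ r + e)⁻¹) := rfl
  rw [hsm] at key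
  have : (∫ t in Ioi (0:ℝ), (t ^ r + e)⁻¹)
      = e ^ r⁻¹ * (e⁻¹ * (π / (r * Real.sin (π / r)))) := by
    rw [key, ← mul_assoc, mul_inv_cancel₀ hc.ne', one_mul]
  rw [this, ← mul_assoc]
  congr 1
  rw [← Real.rpow_neg_one e, ← Real.rpow_add he]
  congr 1
  field_simp
  ring

theorem integrableOn_aux {r e : ℝ} (hr : 1 < r) (he : 0 < e) :
    IntegrableOn (fun t : ℝ => (t ^ r + e)⁻¹) (Ioi 0) := by
  have hr0 : (0:ℝ) < r := by linarith
  have hmeas : Measurable fun t : ℝ => (t ^ r + e)⁻¹ := by fun_prop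
  have hcrp : Continuous fun t : ℝ => t ^ r :=
    continuous_iff_continuousAt.2 fun x => Real.continuousAt_rpow_const x r (Or.inr hr0.le)
  have h1 : IntegrableOn (fun t : ℝ => (t ^ r + e)⁻¹) (Ioc 0 1) := by
    refine (ContinuousOn.integrableOn_compact isCompact_Icc ?_).mono_set Ioc_subset_Icc_self
    refine ((hcrp.add continuous_const).continuousOn).inv₀ fun x hx => ?_
    exact (add_pos_of_nonneg_of_pos (Real.rpow_nonneg hx.1 r) he).ne'
  have h2 : IntegrableOn (fun t : ℝ => (t ^ r + e)⁻¹) (Ioi 1) := by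
    refine MeasureTheory.Integrable.mono
      (integrableOn_Ioi_rpow_of_lt (show -r < -1 by linarith) one_pos)
      hmeas.aestronglyMeasurable.restrict ?_
    filter_upwards [ae_restrict_mem measurableSet_Ioi] with t ht
    have ht0 : (0:ℝ) < t := lt_trans one_pos ht
    have htr : (0:ℝ) < t ^ r := Real.rpow_pos_of_pos ht0 r
    rw [Real.norm_eq_abs, Real.norm_eq_abs, abs_of_nonneg (by positivity),
      abs_of_nonneg (Real.rpow_nonneg ht0.le _), Real.rpow_neg ht0.le]
    gcongr
    linarith
  have := h1.union h2
  rwa [Ioc_union_Ioi_eq_Ioi zero_le_one] at this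




/-- For `1 < r` and `τ > 0`, the difference between `2∫₀^τ (t^r+e)⁻¹ dt` and
`f(e) = (2π)/(r sin(π/r)) e^{-(r-1)/r}` is bounded by `C · g(e)` for `e ∈ (0,1]`. -/
theorem stmt_0 (r τ : ℝ) (hr : 1 < r) (hτ : 0 < τ) :
    ∃ C : ℝ, ∀ e : ℝ, e ∈ Ioc (0:ℝ) 1 →
      |2 * (∫ t in Ioc (0:ℝ) τ, (t ^ r + e)⁻¹) -
          (2 * π) / (r * Real.sin (π / r)) * e ^ (-(r - 1) / r)| ≤
        C * (if r < 2 then 1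
             else if r = 2 then 1 + Real.log (1 + 1 / e)
             else 1 + e ^ (2 - r)) := by
  refine ⟨2 * (τ ^ (1-r) / (r-1)), fun e he => ?_⟩
  obtain ⟨he0, he1⟩ := he
  have hC : (0:ℝ) < 2 * (τ ^ (1-r) / (r-1)) := by
    have h1 : (0:ℝ) < τ ^ (1-r) := Real.rpow_pos_of_pos hτ _
    have h2 : (0:ℝ) < τ ^ (1-r) / (r-1) := div_pos h1 (by linarith)
    linarith
  -- split the integral
  have hint : IntegrableOn (fun t : ℝ => (t ^ r + e)⁻¹) (Ioi 0) := integrableOn_aux hr he0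
  have hint1 : IntegrableOn (fun t : ℝ => (t ^ r + e)⁻¹) (Ioc 0 τ) :=
    hint.mono_set Ioc_subset_Ioi_self
  have hint2 : IntegrableOn (fun t : ℝ => (t ^ r + e)⁻¹) (Ioi τ) :=
    hint.mono_set (Ioi_subset_Ioi hτ.le)
  have hsplit : (∫ t in Ioi (0:ℝ), (t ^ r + e)⁻¹)
      = (∫ t in Ioc (0:ℝ) τ, (t ^ r + e)⁻¹) + ∫ t in Ioi τ, (t ^ r + e)⁻¹ := by
    rw [← Ioc_union_Ioi_eq_Ioi hτ.le,
      setIntegral_union (Ioc_disjoint_Ioi le_rfl) measurableSet_Ioi hint1 hint2]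
  -- tail bounds
  have htail_nonneg : (0:ℝ) ≤ ∫ t in Ioi τ, (t ^ r + e)⁻¹ := by
    refine setIntegral_nonneg measurableSet_Ioi fun x hx => ?_
    have hx0 : (0:ℝ) < x := lt_trans hτ hx
    positivity
  have htail_le : (∫ t in Ioi τ, (t ^ r + e)⁻¹) ≤ τ ^ (1-r) / (r-1) := by
    have hgint : IntegrableOn (fun t : ℝ => t ^ (-r)) (Ioi τ) :=
      integrableOn_Ioi_rpow_of_lt (by linarith) hτ
    have hmono : (∫ t in Ioi τ, (t ^ r + e)⁻¹) ≤ ∫ t in Ioi τ, t ^ (-r) := by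
      refine setIntegral_mono_on hint2 hgint measurableSet_Ioi fun x hx => ?_
      have hx0 : (0:ℝ) < x := lt_trans hτ hx
      have hxr : (0:ℝ) < x ^ r := Real.rpow_pos_of_pos hx0 r
      rw [Real.rpow_neg hx0.le]
      gcongr
      linarith
    have hval : (∫ t in Ioi τ, t ^ (-r)) = τ ^ (1-r) / (r-1) := by
      rw [integral_Ioi_rpow_of_lt (by linarith) hτ, show -r + 1 = 1 - r by ring]
      have h1r : (1:ℝ) - r ≠ 0 := sub_ne_zero.mpr (by linarith)
      have h2r : r - 1 ≠ 0 := sub_ne_zero.mpr (by linarith)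
      field_simp
      ring
    linarith [hmono, hval.le]
  -- rewrite f(e)
  have hfe : (2 * π) / (r * Real.sin (π / r)) * e ^ (-(r - 1) / r)
      = 2 * ∫ t in Ioi (0:ℝ), (t ^ r + e)⁻¹ := by
    rw [int_Ioi_eq r e hr he0]
    ring
  rw [hfe, hsplit]
  rw [show 2 * (∫ t in Ioc (0:ℝ) τ, (t ^ r + e)⁻¹) -
      2 * ((∫ t in Ioc (0:ℝ) τ, (t ^ r + e)⁻¹) + ∫ t in Ioi τ, (t ^ r + e)⁻¹)
      = -(2 * ∫ t in Ioi τ, (t ^ r + e)⁻¹) by ring]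
  rw [abs_neg, abs_of_nonneg (by linarith)]
  have hg1 : (1:ℝ) ≤ (if r < 2 then 1
      else if r = 2 then 1 + Real.log (1 + 1 / e)
      else 1 + e ^ (2 - r)) := by
    split_ifs with h1 h2
    · exact le_refl 1
    · have : (0:ℝ) ≤ Real.log (1 + 1 / e) := by
        apply Real.log_nonneg
        have : (0:ℝ) < 1 / e := by positivity
        linarith
      linarith
    · have : (0:ℝ) ≤ e ^ (2 - r) := Real.rpow_nonneg he0.le _
      linarith
  calc 2 * ∫ t in Ioi τ, (t ^ r + e)⁻¹ ≤ 2 * (τ ^ (1-r) / (r-1)) := by linarith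
    _ ≤ _ := le_mul_of_one_le_right hC.le hg1
end

section
/- If 1 ≤ r < 2 and τ > 0, then the limit C_τ = lim_{e→0⁺} [∫₀^τ 2/(t^r + e) dt − f(e)] exists and is finite, where f(e) = (2π)/(r sin(π/r)) e^{-(r-1)/r} for r > 1 and f(e) = 2 log(1 + 1/e) for r = 1. -/
/-!
For `r > 1`, the substitution `t = e^{1/r} x` gives
`∫₀^∞ dt/(t^r + e) = e^{1/r - 1} ∫₀^∞ dx/(1 + x^r)`, and the substitutions `u = x^r`,
`u = s/(1 - s)` turn the last integral into `B(1/r, 1 - 1/r)/r = π/(r sin(π/r))` (Euler's reflection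
formula). So the expression under the limit is exactly `-2 ∫_τ^∞ dt/(t^r + e)`, which converges to
`-2 ∫_τ^∞ t^{-r} dt` by dominated convergence. For `r = 1` the expression is
`2 log(τ + e) - 2 log(1 + e)`, which tends to `2 log τ`.
-/

open Real MeasureTheory Set Filter Topology

theorem integral_rpow_mul_one_sub_rpow_neg {a : ℝ} (h0 : 0 < a) (h1 : a < 1) :
    ∫ x in (0:ℝ)..1, x ^ (a - 1) * (1 - x) ^ (-a) = π / sin (π * a) := by
  have hbeta : ((∫ x in (0:ℝ)..1, x ^ (a - 1) * (1 - x) ^ (-a) : ℝ) : ℂ)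
      = Complex.betaIntegral a (1 - a) := by
    rw [← intervalIntegral.integral_ofReal]
    refine intervalIntegral.integral_congr fun x hx => ?_
    rw [uIcc_of_le zero_le_one] at hx
    rw [Complex.ofReal_mul, Complex.ofReal_cpow hx.1, Complex.ofReal_cpow (sub_nonneg.2 hx.2)]
    push_cast
    ring_nf
  have hreflect : Complex.betaIntegral a (1 - a) = π / Complex.sin (π * a) := by
    have h := Complex.Gamma_mul_Gamma_eq_betaIntegral (s := a) (t := 1 - a)
      (by simpa using h0) (by simpa using h1)
    rwa [add_sub_cancel, Complex.Gamma_one, one_mul, Complex.Gamma_mul_Gamma_one_sub, eq_comm] at h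
  exact_mod_cast hbeta.trans hreflect

theorem integral_Ioi_rpow_sub_one_div_one_add {a : ℝ} (h0 : 0 < a) (h1 : a < 1) :
    ∫ u in Ioi (0:ℝ), u ^ (a - 1) / (1 + u) = π / sin (π * a) := by
  set φ : ℝ → ℝ := fun s => s / (1 - s)
  have himage : φ '' Ioo 0 1 = Ioi 0 := by
    ext u
    refine ⟨?_, fun hu => ?_⟩
    · rintro ⟨s, ⟨hs0, hs1⟩, rfl⟩
      exact div_pos hs0 (sub_pos.2 hs1)
    · have hu1 : (0:ℝ) < 1 + u := by linarith [mem_Ioi.1 hu]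
      refine ⟨u / (1 + u), ⟨div_pos hu hu1, (div_lt_one hu1).2 (by linarith)⟩, ?_⟩
      simp only [φ]
      field_simp
      ring
  have hderiv : ∀ s ∈ Ioo (0:ℝ) 1, HasDerivWithinAt φ ((1 - s) ^ 2)⁻¹ (Ioo 0 1) s := by
    intro s hs
    have h1s : 1 - s ≠ 0 := (sub_pos.2 hs.2).ne'
    refine (((hasDerivAt_id' s).div ((hasDerivAt_id' s).const_sub 1) h1s).congr_deriv ?_)
      |>.hasDerivWithinAt
    field_simp
    ring
  have hinj : InjOn φ (Ioo 0 1) := by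
    intro x hx y hy h
    have hx1 : 1 - x ≠ 0 := (sub_pos.2 hx.2).ne'
    have hy1 : 1 - y ≠ 0 := (sub_pos.2 hy.2).ne'
    simp only [φ] at h
    field_simp at h
    linarith
  have hintegrand : EqOn (fun s => |((1 - s) ^ 2)⁻¹| • (φ s ^ (a - 1) / (1 + φ s)))
      (fun s => s ^ (a - 1) * (1 - s) ^ (-a)) (Ioo 0 1) := by
    intro s ⟨hs0, hs1⟩
    have h1s : 0 < 1 - s := sub_pos.2 hs1
    have : 0 < s ^ a := rpow_pos_of_pos hs0 a
    have : 0 < (1 - s) ^ a := rpow_pos_of_pos h1s a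
    simp only [φ, smul_eq_mul]
    rw [abs_of_pos (by positivity), div_rpow hs0.le h1s.le,
      show 1 + s / (1 - s) = (1 - s)⁻¹ by field_simp; ring,
      rpow_sub h1s, rpow_sub hs0, rpow_one, rpow_one, rpow_neg h1s.le]
    field_simp
  rw [← himage, integral_image_eq_integral_abs_deriv_smul measurableSet_Ioo hderiv hinj,
    setIntegral_congr_fun measurableSet_Ioo hintegrand, ← integral_Ioc_eq_integral_Ioo,
    ← intervalIntegral.integral_of_le zero_le_one, integral_rpow_mul_one_sub_rpow_neg h0 h1]

theorem integral_Ioi_inv_one_add_rpow {r : ℝ} (hr : 1 < r) :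
    ∫ t in Ioi (0:ℝ), (1 + t ^ r)⁻¹ = π / (r * sin (π / r)) := by
  have hr0 : 0 < r := by linarith
  have hsubst := integral_comp_rpow_Ioi_of_pos (g := fun u => u ^ (1 / r - 1) / (1 + u)) hr0
  have hintegrand : EqOn (fun t => (r * t ^ (r - 1)) • ((t ^ r) ^ (1 / r - 1) / (1 + t ^ r)))
      (fun t => r * (1 + t ^ r)⁻¹) (Ioi 0) := by
    intro t (ht : 0 < t)
    have : 0 < t ^ r := rpow_pos_of_pos ht r
    have hcancel : t ^ (r - 1) * t ^ (1 - r) = 1 := by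
      rw [← rpow_add ht, sub_add_sub_cancel', sub_self, rpow_zero]
    simp only [smul_eq_mul]
    rw [← rpow_mul ht.le, show r * (1 / r - 1) = 1 - r by field_simp]
    field_simp
    linear_combination hcancel
  rw [setIntegral_congr_fun measurableSet_Ioi hintegrand, integral_const_mul,
    integral_Ioi_rpow_sub_one_div_one_add (by positivity) ((div_lt_one hr0).2 hr), mul_one_div] at hsubst
  rw [mul_comm r, ← div_div, ← hsubst, mul_div_cancel_left₀ _ hr0.ne']

section

variable {r e τ : ℝ}

theorem continuousOn_inv_rpow_add (hr : 0 < r) (he : 0 ≤ e) :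
    ContinuousOn (fun t : ℝ => (t ^ r + e)⁻¹) (Ioi 0) := by
  refine ContinuousOn.inv₀ (fun t _ => ?_) fun t (ht : 0 < t) => by positivity
  exact ((continuousAt_rpow_const t r (Or.inr hr.le)).add continuousAt_const).continuousWithinAt

theorem inv_rpow_add_le_rpow_neg (he : 0 ≤ e) {t : ℝ} (ht : 0 < t) :
    (t ^ r + e)⁻¹ ≤ t ^ (-r) := by
  rw [rpow_neg ht.le]
  exact inv_anti₀ (rpow_pos_of_pos ht r) (le_add_of_nonneg_right he)

theorem integral_Ioi_inv_rpow_add (hr : 0 < r) (he : 0 < e) :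
    ∫ t in Ioi (0:ℝ), (t ^ r + e)⁻¹ = e ^ (1 / r - 1) * ∫ t in Ioi (0:ℝ), (1 + t ^ r)⁻¹ := by
  set c := e ^ (1 / r)
  have hc : 0 < c := rpow_pos_of_pos he _
  have hcr : c ^ r = e := by rw [← rpow_mul he.le, one_div_mul_cancel hr.ne', rpow_one]
  have hsubst := integral_comp_mul_left_Ioi (fun t => (t ^ r + e)⁻¹) 0 hc
  have hintegrand : EqOn (fun t => ((c * t) ^ r + e)⁻¹) (fun t => e⁻¹ * (1 + t ^ r)⁻¹) (Ioi 0) := by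
    intro t (ht : 0 < t)
    dsimp only
    rw [mul_rpow hc.le ht.le, hcr, ← mul_inv, mul_one_add, add_comm e]
  rw [mul_zero, setIntegral_congr_fun measurableSet_Ioi hintegrand, integral_const_mul,
    smul_eq_mul, eq_inv_mul_iff_mul_eq₀ hc.ne'] at hsubst
  rw [← hsubst, rpow_sub he, rpow_one]
  ring

theorem integrableOn_Ioc_inv_rpow_add (hr : 0 < r) (he : 0 < e) :
    IntegrableOn (fun t : ℝ => (t ^ r + e)⁻¹) (Ioc 0 τ) := by
  refine (integrableOn_const (C := e⁻¹) measure_Ioc_lt_top.ne).mono'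
    ((continuousOn_inv_rpow_add hr he.le).mono Ioc_subset_Ioi_self
      |>.aestronglyMeasurable measurableSet_Ioc) ?_
  refine (ae_restrict_iff' measurableSet_Ioc).2 (ae_of_all _ fun t ht => ?_)
  have : 0 ≤ t ^ r := rpow_nonneg ht.1.le r
  rw [norm_inv, Real.norm_of_nonneg (by positivity)]
  exact inv_anti₀ he (by linarith)

theorem integrableOn_Ioi_inv_rpow_add (hr : 1 < r) (he : 0 ≤ e) (hτ : 0 < τ) :
    IntegrableOn (fun t : ℝ => (t ^ r + e)⁻¹) (Ioi τ) := by
  refine (integrableOn_Ioi_rpow_of_lt (neg_lt_neg hr) hτ).mono'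
    ((continuousOn_inv_rpow_add (by linarith) he).mono (Ioi_subset_Ioi hτ.le)
      |>.aestronglyMeasurable measurableSet_Ioi) ?_
  refine (ae_restrict_iff' measurableSet_Ioi).2 (ae_of_all _ fun t (ht : τ < t) => ?_)
  have ht0 : 0 < t := hτ.trans ht
  rw [norm_inv, Real.norm_of_nonneg (by positivity)]
  exact inv_rpow_add_le_rpow_neg he ht0

theorem tendsto_integral_Ioi_inv_rpow_add (hr : 1 < r) (hτ : 0 < τ) :
    Tendsto (fun e => ∫ t in Ioi τ, (t ^ r + e)⁻¹) (𝓝[>] 0) (𝓝 (∫ t in Ioi τ, (t ^ r)⁻¹)) := by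
  have hτt : ∀ t ∈ Ioi τ, 0 < t := fun t ht => hτ.trans ht
  refine tendsto_integral_filter_of_dominated_convergence (fun t => t ^ (-r)) ?_ ?_
    (integrableOn_Ioi_rpow_of_lt (neg_lt_neg hr) hτ) ?_
  · filter_upwards [self_mem_nhdsWithin] with e (he : 0 < e)
    exact (integrableOn_Ioi_inv_rpow_add hr he.le hτ).aestronglyMeasurable
  · filter_upwards [self_mem_nhdsWithin] with e (he : 0 < e)
    refine (ae_restrict_iff' measurableSet_Ioi).2 (ae_of_all _ fun t ht => ?_)
    have ht0 := hτt t ht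
    rw [norm_inv, Real.norm_of_nonneg (by positivity)]
    exact inv_rpow_add_le_rpow_neg he.le ht0
  · refine (ae_restrict_iff' measurableSet_Ioi).2 (ae_of_all _ fun t ht => ?_)
    have : 0 < t ^ r := rpow_pos_of_pos (hτt t ht) r
    refine Tendsto.mono_left ?_ nhdsWithin_le_nhds
    exact ((continuous_const.add continuous_id).tendsto' 0 _ (add_zero _)).inv₀ this.ne'

theorem integral_Ioc_inv_rpow_add (hr : 1 < r) (he : 0 < e) (hτ : 0 < τ) :
    ∫ t in Ioc 0 τ, (t ^ r + e)⁻¹ =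
      π / (r * sin (π / r)) * e ^ (-(r - 1) / r) - ∫ t in Ioi τ, (t ^ r + e)⁻¹ := by
  have hr0 : 0 < r := by linarith
  have hsplit := setIntegral_union Ioc_disjoint_Ioi_same measurableSet_Ioi
    (integrableOn_Ioc_inv_rpow_add hr0 he) (integrableOn_Ioi_inv_rpow_add hr he.le hτ)
  rw [Ioc_union_Ioi_eq_Ioi hτ.le, integral_Ioi_inv_rpow_add hr0 he,
    integral_Ioi_inv_one_add_rpow hr] at hsplit
  rw [show -(r - 1) / r = 1 / r - 1 by field_simp; ring, eq_sub_iff_add_eq, ← hsplit, mul_comm]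

theorem tendsto_integral_Ioc_two_div_rpow_add_sub (hr : 1 < r) (hτ : 0 < τ) :
    Tendsto (fun e => (∫ t in Ioc 0 τ, 2 / (t ^ r + e)) -
        2 * π / (r * sin (π / r)) * e ^ (-(r - 1) / r))
      (𝓝[>] 0) (𝓝 (-2 * ∫ t in Ioi τ, (t ^ r)⁻¹)) := by
  refine ((tendsto_integral_Ioi_inv_rpow_add hr hτ).const_mul (-2)).congr' ?_
  filter_upwards [self_mem_nhdsWithin] with e (he : 0 < e)
  simp only [div_eq_mul_inv (2:ℝ), integral_const_mul, integral_Ioc_inv_rpow_add hr he hτ]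
  ring

end

theorem tendsto_integral_Ioc_two_div_add_sub_log {τ : ℝ} (hτ : 0 < τ) :
    Tendsto (fun e => (∫ t in Ioc 0 τ, 2 / (t + e)) - 2 * log (1 + 1 / e))
      (𝓝[>] 0) (𝓝 (2 * log τ)) := by
  have hcont : ContinuousAt (fun e => 2 * log (τ + e) - 2 * log (1 + e)) 0 := by
    fun_prop (disch := simp [hτ.ne'])
  refine Tendsto.congr' ?_ (by simpa using hcont.tendsto.mono_left nhdsWithin_le_nhds)
  filter_upwards [self_mem_nhdsWithin] with e (he : 0 < e)
  rw [← intervalIntegral.integral_of_le hτ.le]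
  simp only [div_eq_mul_inv (2:ℝ), intervalIntegral.integral_const_mul,
    intervalIntegral.integral_comp_add_right (fun t => t⁻¹), zero_add]
  rw [integral_inv_of_pos he (by linarith), one_add_div he.ne', add_comm e 1,
    log_div (by linarith) he.ne', log_div (by linarith) he.ne']
  ring

theorem stmt_3_general (r τ : ℝ) (hr1 : 1 ≤ r) (hτ : 0 < τ) :
    ∃ Cτ : ℝ, Tendsto
      (fun e : ℝ => (∫ t in Ioc (0:ℝ) τ, 2 / (t ^ r + e)) -
        (if r = 1 then 2 * Real.log (1 + 1 / e)
         else (2 * π) / (r * Real.sin (π / r)) * e ^ (-(r - 1) / r)))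
      (nhdsWithin 0 (Ioi 0)) (nhds Cτ) := by
  rcases hr1.eq_or_lt with rfl | hr1
  · refine ⟨_, (tendsto_integral_Ioc_two_div_add_sub_log hτ).congr fun e => ?_⟩
    simp only [rpow_one, if_true]
  · refine ⟨_, (tendsto_integral_Ioc_two_div_rpow_add_sub hr1 hτ).congr fun e => ?_⟩
    rw [if_neg hr1.ne']

/-- For `1 ≤ r < 2` and `τ > 0`, the limit
`C_τ = lim_{e→0⁺} [∫₀^τ 2/(t^r+e) dt − f(e)]` exists and is finite, where
`f(e) = (2π)/(r sin(π/r)) e^{-(r-1)/r}` for `r > 1` and `f(e) = 2 log(1+1/e)` for `r = 1`. -/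
theorem stmt_3 (r τ : ℝ) (hr1 : 1 ≤ r) (hr2 : r < 2) (hτ : 0 < τ) :
    ∃ Cτ : ℝ, Tendsto
      (fun e : ℝ => (∫ t in Ioc (0:ℝ) τ, 2 / (t ^ r + e)) -
        (if r = 1 then 2 * Real.log (1 + 1 / e)
         else (2 * π) / (r * Real.sin (π / r)) * e ^ (-(r - 1) / r)))
      (nhdsWithin 0 (Ioi 0)) (nhds Cτ) :=
  stmt_3_general r τ hr1 hτ
end

section
/- Let V ∈ L¹(ℝⁿ) satisfy ∬ |V(x)| |V(y)| |x−y|² dx dy < ∞, let ψ ∈ L²(ℝⁿ) and φ = |V|^{1/2} ψ. Then the gradient of p ↦ |φ̂(p)|² satisfies the uniform bound |∇|φ̂(p)|²| ≤ (2π)^{-n} ‖ψ‖₂² (∬ |V(x)||V(y)| |x−y|² dx dy)^{1/2} for all p ∈ ℝⁿ. -/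
open Real MeasureTheory Complex
open scoped ComplexConjugate

/-!
Writing `|φ̂(q)|² = ∬ φ(x) conj φ(y) e^{i⟨q, y - x⟩} dx dy` and using
`|e^{is} - e^{it}| ≤ |s - t|` shows that `q ↦ |φ̂(q)|²` is Lipschitz with constant
`∬ |φ(x)| |φ(y)| |x - y|`, which therefore bounds its derivative (also where `fderiv`
takes the junk value `0`). Splitting
`|φ(x)| |φ(y)| |x - y| = (|V(x)| |V(y)| |x - y|²)^{1/2} · |ψ(x)| |ψ(y)|` and applying
Cauchy–Schwarz on `ℝⁿ × ℝⁿ` bounds that constant by `‖ψ‖₂² (∬ |V(x)| |V(y)| |x - y|²)^{1/2}`.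
-/

theorem Complex.norm_exp_I_mul_sub_exp_I_mul_le (s t : ℝ) :
    ‖Complex.exp (I * s) - Complex.exp (I * t)‖ ≤ |s - t| := by
  have h : Complex.exp (I * s) - Complex.exp (I * t) =
      Complex.exp (I * t) * (Complex.exp (I * ↑(s - t)) - 1) := by
    rw [mul_sub, ← Complex.exp_add]; push_cast; ring_nf
  rw [h, norm_mul, Complex.norm_exp_I_mul_ofReal, one_mul]
  exact norm_exp_I_mul_ofReal_sub_one_le

theorem norm_sqrt_abs_mul_mul_norm_sqrt_abs_mul_mul (a b d : ℝ) (u v : ℂ) (hd : 0 ≤ d) :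
    ‖(√|a| : ℂ) * u‖ * ‖(√|b| : ℂ) * v‖ * d = √(|a| * |b| * d ^ 2) * (‖u‖ * ‖v‖) := by
  rw [sqrt_mul (by positivity), sqrt_mul (abs_nonneg _), sqrt_sq hd, norm_mul, norm_mul,
    norm_real, norm_real, norm_of_nonneg (sqrt_nonneg _), norm_of_nonneg (sqrt_nonneg _)]
  ring

section Measure
variable {α : Type*} [MeasurableSpace α] {μ : Measure α}

theorem memLp_two_sqrt {W : α → ℝ} (hW : Integrable W μ) (hW0 : ∀ x, 0 ≤ W x) :
    MemLp (fun x => √(W x)) 2 μ := by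
  refine (memLp_two_iff_integrable_sq (continuous_sqrt.comp_aestronglyMeasurable hW.1)).2 ?_
  simpa only [sq_sqrt (hW0 _)] using hW

theorem integral_sqrt_mul_le {W g : α → ℝ} (hW : Integrable W μ) (hW0 : ∀ x, 0 ≤ W x)
    (hg : MemLp g 2 μ) (hg0 : ∀ x, 0 ≤ g x) :
    ∫ x, √(W x) * g x ∂μ ≤ √(∫ x, W x ∂μ) * √(∫ x, g x ^ 2 ∂μ) := by
  have hW2 : MemLp (fun x => √(W x)) (ENNReal.ofReal 2) μ := by
    simpa using memLp_two_sqrt hW hW0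
  have hg2 : MemLp g (ENNReal.ofReal 2) μ := by simpa using hg
  have := integral_mul_le_Lp_mul_Lq_of_nonneg HolderConjugate.two_two
    (.of_forall fun x => sqrt_nonneg (W x)) (.of_forall hg0) hW2 hg2
  simpa only [rpow_two, sq_sqrt (hW0 _), ← sqrt_eq_rpow] using this

theorem memLp_two_norm_mul_norm {E : Type*} [NormedAddCommGroup E] {ψ : α → E}
    (hψ : MemLp ψ 2 μ) : MemLp (fun z : α × α => ‖ψ z.1‖ * ‖ψ z.2‖) 2 (μ.prod μ) := by
  refine (memLp_two_iff_integrable_sq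
    (hψ.1.norm.comp_fst.mul hψ.1.norm.comp_snd)).2 ?_
  simpa only [Pi.mul_apply, mul_pow] using
    hψ.norm.integrable_sq.mul_prod hψ.norm.integrable_sq

theorem integral_sq_norm_mul_norm [SFinite μ] {E : Type*} [NormedAddCommGroup E]
    (ψ : α → E) :
    ∫ z : α × α, (‖ψ z.1‖ * ‖ψ z.2‖) ^ 2 ∂μ.prod μ = (∫ x, ‖ψ x‖ ^ 2 ∂μ) ^ 2 := by
  simp only [mul_pow]
  rw [sq (∫ x, _ ∂μ)]
  exact integral_prod_mul (fun x => ‖ψ x‖ ^ 2) (fun x => ‖ψ x‖ ^ 2)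

theorem norm_integral_sq_eq_re_integral_mul_conj [SFinite μ] (f : α → ℂ) :
    ‖∫ x, f x ∂μ‖ ^ 2 = (∫ z, f z.1 * conj (f z.2) ∂μ.prod μ).re := by
  rw [integral_prod_mul f (fun y => conj (f y)), integral_conj, mul_conj, ofReal_re,
    normSq_eq_norm_sq]

section Weighted
variable {V : α → ℝ} {ψ : α → ℂ} {w : α × α → ℝ}
  (hψ : MemLp ψ 2 μ) (hw : ∀ z, 0 ≤ w z)
  (hVV : Integrable (fun z => |V z.1| * |V z.2| * w z ^ 2) (μ.prod μ))
include hψ hw hVV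

theorem integrable_norm_sqrt_abs_mul_mul_norm_sqrt_abs_mul_mul :
    Integrable (fun z => ‖(√|V z.1| : ℂ) * ψ z.1‖ * ‖(√|V z.2| : ℂ) * ψ z.2‖ * w z)
      (μ.prod μ) := by
  simp only [norm_sqrt_abs_mul_mul_norm_sqrt_abs_mul_mul _ _ _ _ _ (hw _)]
  exact (memLp_two_sqrt hVV fun z => by positivity).integrable_mul
    (memLp_two_norm_mul_norm hψ)

theorem integral_norm_sqrt_abs_mul_mul_norm_sqrt_abs_mul_mul_le [SFinite μ] :
    ∫ z, ‖(√|V z.1| : ℂ) * ψ z.1‖ * ‖(√|V z.2| : ℂ) * ψ z.2‖ * w z ∂μ.prod μ ≤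
      (∫ x, ‖ψ x‖ ^ 2 ∂μ) * √(∫ z, |V z.1| * |V z.2| * w z ^ 2 ∂μ.prod μ) := by
  simp only [norm_sqrt_abs_mul_mul_norm_sqrt_abs_mul_mul _ _ _ _ _ (hw _)]
  refine (integral_sqrt_mul_le hVV (fun z => by positivity) (memLp_two_norm_mul_norm hψ)
    (fun z => by positivity)).trans_eq ?_
  rw [integral_sq_norm_mul_norm, sqrt_sq (integral_nonneg fun x => by positivity), mul_comm]

end Weighted

end Measure

section Fourier
variable {E : Type*} [NormedAddCommGroup E] [InnerProductSpace ℝ E]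

theorem mul_exp_neg_I_inner_mul_conj (φ : E → ℂ) (q x y : E) :
    φ x * Complex.exp (-I * inner ℝ q x) * conj (φ y * Complex.exp (-I * inner ℝ q y)) =
      φ x * conj (φ y) * Complex.exp (I * inner ℝ q (y - x)) := by
  rw [map_mul, ← Complex.exp_conj, inner_sub_right, mul_mul_mul_comm, ← Complex.exp_add]
  simp only [map_mul, map_neg, conj_I, conj_ofReal]
  push_cast
  ring_nf

theorem norm_mul_exp_neg_I_inner_mul_conj_sub_le (φ : E → ℂ) (q q' x y : E) :
    ‖φ x * Complex.exp (-I * inner ℝ q x) * conj (φ y * Complex.exp (-I * inner ℝ q y)) -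
        φ x * Complex.exp (-I * inner ℝ q' x) * conj (φ y * Complex.exp (-I * inner ℝ q' y))‖ ≤
      ‖φ x‖ * ‖φ y‖ * ‖x - y‖ * dist q q' := by
  have hphase : |inner ℝ q (y - x) - inner ℝ q' (y - x)| ≤ ‖x - y‖ * dist q q' := by
    rw [← inner_sub_left, dist_eq_norm, norm_sub_rev x y, mul_comm]
    exact abs_real_inner_le_norm _ _
  rw [mul_exp_neg_I_inner_mul_conj, mul_exp_neg_I_inner_mul_conj, ← mul_sub, norm_mul,
    norm_mul, RCLike.norm_conj, mul_assoc (‖φ x‖ * ‖φ y‖)]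
  gcongr
  exact (norm_exp_I_mul_sub_exp_I_mul_le _ _).trans hphase

variable [MeasurableSpace E] [OpensMeasurableSpace E] {μ : Measure E} {φ : E → ℂ}

theorem integrable_mul_exp_neg_I_inner (hφ : Integrable φ μ) (q : E) :
    Integrable (fun x => φ x * Complex.exp (-I * inner ℝ q x)) μ :=
  hφ.mul_bdd (c := 1) (by fun_prop) (.of_forall fun x => by
    rw [neg_mul, ← mul_neg, ← ofReal_neg, Complex.norm_exp_I_mul_ofReal])

theorem lipschitzWith_norm_integral_mul_exp_neg_I_inner_sq [SFinite μ] (hφ : Integrable φ μ)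
    (hW : Integrable (fun z : E × E => ‖φ z.1‖ * ‖φ z.2‖ * ‖z.1 - z.2‖) (μ.prod μ)) :
    LipschitzWith (∫ z : E × E, ‖φ z.1‖ * ‖φ z.2‖ * ‖z.1 - z.2‖ ∂μ.prod μ).toNNReal
      (fun q : E => ‖∫ x, φ x * Complex.exp (-I * inner ℝ q x) ∂μ‖ ^ 2) := by
  have hprod (q : E) : Integrable (fun z : E × E =>
      φ z.1 * Complex.exp (-I * inner ℝ q z.1) *
        conj (φ z.2 * Complex.exp (-I * inner ℝ q z.2))) (μ.prod μ) :=
    (integrable_mul_exp_neg_I_inner hφ q).mul_prod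
      ((Complex.conjLIE.integrable_comp_iff).2 (integrable_mul_exp_neg_I_inner hφ q))
  refine .of_dist_le_mul fun q q' => ?_
  rw [Real.coe_toNNReal _ (integral_nonneg fun z => by positivity), Real.dist_eq,
    norm_integral_sq_eq_re_integral_mul_conj, norm_integral_sq_eq_re_integral_mul_conj,
    ← sub_re, ← integral_sub (hprod q) (hprod q'), ← integral_mul_const]
  refine (abs_re_le_norm _).trans (norm_integral_le_of_norm_le (hW.mul_const _) ?_)
  exact .of_forall fun z => norm_mul_exp_neg_I_inner_mul_conj_sub_le φ q q' z.1 z.2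

end Fourier

/-- For `V ∈ L¹(ℝⁿ)` with `∬ |V(x)||V(y)||x−y|² dx dy < ∞`, `ψ ∈ L²`, and
`φ = |V|^{1/2}ψ`, the gradient of `p ↦ |φ̂(p)|²` is bounded uniformly by
`(2π)^{-n} ‖ψ‖₂² (∬ |V(x)||V(y)||x−y|² dx dy)^{1/2}`. -/
theorem stmt_5 (n : ℕ) (V : EuclideanSpace ℝ (Fin n) → ℝ)
    (ψ : EuclideanSpace ℝ (Fin n) → ℂ)
    (hV : Integrable V) (hψ : MemLp ψ 2 volume)
    (hVV : Integrable (fun z : EuclideanSpace ℝ (Fin n) × EuclideanSpace ℝ (Fin n) =>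
      |V z.1| * |V z.2| * ‖z.1 - z.2‖ ^ 2)) :
    ∀ p : EuclideanSpace ℝ (Fin n),
      ‖fderiv ℝ (fun q : EuclideanSpace ℝ (Fin n) =>
          ‖(((2 * π) ^ (-(n : ℝ) / 2) : ℝ) : ℂ) *
            ∫ x, (Real.sqrt |V x| : ℂ) * ψ x *
              Complex.exp (-Complex.I * ((inner ℝ q x : ℝ) : ℂ))‖ ^ 2) p‖ ≤
        (2 * π : ℝ) ^ (-(n : ℝ)) * (∫ x, ‖ψ x‖ ^ 2) *
          Real.sqrt (∫ z : EuclideanSpace ℝ (Fin n) × EuclideanSpace ℝ (Fin n),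
            |V z.1| * |V z.2| * ‖z.1 - z.2‖ ^ 2) := by
  intro p
  have hφ : Integrable (fun x => (√|V x| : ℂ) * ψ x) :=
    (memLp_two_sqrt hV.abs fun x => abs_nonneg (V x)).ofReal.integrable_mul hψ
  have hW := integrable_norm_sqrt_abs_mul_mul_norm_sqrt_abs_mul_mul hψ (fun _ => norm_nonneg _) hVV
  have hc : ‖(((2 * π) ^ (-(n : ℝ) / 2) : ℝ) : ℂ)‖ ^ 2 = (2 * π) ^ (-(n : ℝ)) := by
    rw [norm_real, norm_of_nonneg (by positivity), ← rpow_natCast, ← rpow_mul (by positivity)]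
    norm_num
  simp only [norm_mul, mul_pow, hc]
  refine (norm_fderiv_le_of_lipschitz ℝ ((lipschitzWith_smul ((2 * π) ^ (-(n : ℝ)) : ℝ)).comp
    (lipschitzWith_norm_integral_mul_exp_neg_I_inner_sq hφ hW))).trans ?_
  rw [NNReal.coe_mul, coe_nnnorm, norm_of_nonneg (by positivity),
    coe_toNNReal _ (integral_nonneg fun z => by positivity), mul_assoc]
  gcongr
  exact integral_norm_sqrt_abs_mul_mul_norm_sqrt_abs_mul_mul_le hψ (fun _ => norm_nonneg _) hVV
end
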